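/- arXiv:1405.5143 — 4 statements merged into one kernel-verified Lean document; each statement's English description precedes it below -/
import Mathlib

section
/- Let k, n be natural numbers and J : Matrix (Fin k) (Fin (n+1)) ℂ. Define J' : Matrix (Fin (k+1)) (Fin (n+2)) ℂ whose first row is Fin.snoc (fun _ => (−1 : ℂ)) 1 (the vector (−1,…,−1,1)) and whose remaining rows are Fin.snoc (J i) 0 (the rows of J each extended by a final 0). Then for every w : Fin (n+1) → ℂ and c : ℂ, the vector Fin.snoc w c lies in the ℂ-linear span of the rows of J' if and only if the vector (fun i => w i + c) lies in the ℂ-linear span of the rows of J. -/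
/-!
The linear map `φ v = (v i + v last)ᵢ` sends `Fin.snoc w c` to `w + c`, the first row of `J'` to
`0`, and every other row `Fin.snoc (J i) 0` to `J i`. Its kernel is the line spanned by the first
row `(-1, …, -1, 1)`, which lies in the row span of `J'`; hence the row span of `J'` is the full
preimage under `φ` of its image, the row span of `J`.
-/

open Submodule

namespace Fin

variable (R : Type*) [Ring R] (n : ℕ)

def addLastLinearMap : (Fin (n + 1) → R) →ₗ[R] (Fin n → R) where
  toFun v i := v i.castSucc + v (last n)
  map_add' v w := by ext i; simp only [Pi.add_apply]; abel
  map_smul' a v := by ext i; simp [mul_add]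

variable {R n}

@[simp]
theorem addLastLinearMap_snoc (w : Fin n → R) (c : R) :
    addLastLinearMap R n (snoc w c) = fun i => w i + c := by
  ext i; simp [addLastLinearMap]

theorem ker_addLastLinearMap_le :
    LinearMap.ker (addLastLinearMap R n) ≤ R ∙ (snoc (fun _ => -1) 1 : Fin (n + 1) → R) := by
  intro v hv
  refine mem_span_singleton.2 ⟨v (last n), funext fun j => ?_⟩
  have hsum (i : Fin n) : v i.castSucc + v (last n) = 0 := congrFun hv i
  refine lastCases ?_ (fun i => ?_) j
  · simp
  · simp [eq_neg_of_add_eq_zero_left (hsum i)]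

end Fin

theorem Submodule.mem_span_range_cons_iff {R M N : Type*} [Ring R] [AddCommGroup M] [Module R M]
    [AddCommGroup N] [Module R N] {φ : M →ₗ[R] N} {e : M} (he : LinearMap.ker φ ≤ R ∙ e)
    (hφe : φ e = 0) {k : ℕ} (r : Fin k → M) (v : M) :
    v ∈ span R (Set.range (Fin.cons e r : Fin (k + 1) → M)) ↔
      φ v ∈ span R (Set.range (φ ∘ r)) := by
  have hker : LinearMap.ker φ ≤ span R (Set.range (Fin.cons e r : Fin (k + 1) → M)) :=
    he.trans (span_mono (by simp))
  rw [← comap_map_eq_self hker, mem_comap, map_span, Fin.range_cons, Set.image_insert_eq, hφe,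
    span_insert_zero, ← Set.range_comp]

theorem snoc_mem_rowSpan_extended_iff
    (k n : ℕ) (J : Matrix (Fin k) (Fin (n+1)) ℂ)
    (J' : Matrix (Fin (k+1)) (Fin (n+2)) ℂ)
    (hJ'0 : J' 0 = Fin.snoc (fun _ => (-1 : ℂ)) 1)
    (hJ' : ∀ i : Fin k, J' i.succ = Fin.snoc (J i) 0)
    (w : Fin (n+1) → ℂ) (c : ℂ) :
    Fin.snoc w c ∈ Submodule.span ℂ (Set.range fun i => J' i) ↔
      (fun i => w i + c) ∈ Submodule.span ℂ (Set.range fun i => J i) := by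
  have hrows : (fun i => J' i) = Fin.cons (Fin.snoc (fun _ => -1) 1) fun i => Fin.snoc (J i) 0 :=
    funext fun i => Fin.cases (by simpa using hJ'0) (fun i => by simpa using hJ' i) i
  have hφe : Fin.addLastLinearMap ℂ (n + 1) (Fin.snoc (fun _ => -1) 1) = 0 := by
    ext i; simp
  rw [hrows, mem_span_range_cons_iff (Fin.ker_addLastLinearMap_le (R := ℂ) (n := n + 1)) hφe]
  simp [Function.comp_def]
end

section
/- Let n, k be natural numbers, f : Fin k → MvPolynomial (Fin (n+1)) ℂ, and u : Fin (n+1) → ℂ with u₊ := ∑ i, u i. Let p : Fin (n+1) → ℂ satisfy p i ≠ 0 for all i and p₊ := ∑ i, p i ≠ 0, and set p' := Fin.snoc p p₊ : Fin (n+2) → ℂ. Let H := X (Fin.last (n+1)) − ∑ i, X (Fin.castSucc i) and F := Fin.cons H (fun j => MvPolynomial.rename Fin.castSucc (f j)) : Fin (k+1) → MvPolynomial (Fin (n+2)) ℂ. Then the vector (fun i => u i / p i − u₊ / p₊) lies in the ℂ-linear span of the rows of the Jacobian matrix of f evaluated at p (the matrix with (j,i) entry eval p (pderiv i (f j))) if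 and only if the vector Fin.snoc (fun i => u i / p i) (−u₊ / p₊) lies in the ℂ-linear span of the rows of the Jacobian matrix of F evaluated at p' (the matrix with (j,i) entry eval p' (pderiv i (F j))). -/
open MvPolynomial
open scoped BigOperators

/-!
The rows of the Jacobian of `X'` at `(p, p₊)` are the rows `∇fⱼ(p)` of the Jacobian of `X`,
padded by a zero last coordinate, together with `∇H = (-1, …, -1, 1)`. The gradient vector of
`l_u'` is the padded gradient vector of `l_u` minus `(u₊ / p₊) • ∇H`, so it lies in the larger span
exactly when the padded vector does. Since `∇H` is the only row with a nonzero last coordinate,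
this happens exactly when the gradient vector of `l_u` lies in the span of the `∇fⱼ(p)`.
-/

section LinearAlgebra

variable {K V W : Type*} [DivisionRing K] [AddCommGroup V] [Module K V] [AddCommGroup W]
  [Module K W]

theorem Submodule.add_smul_mem_span_insert_image_iff {L : V →ₗ[K] W}
    (hL : Function.Injective L) {r : W} (hr : r ∉ LinearMap.range L) (S : Set V) (v : V)
    (c : K) : L v + c • r ∈ Submodule.span K (insert r (L '' S)) ↔ v ∈ Submodule.span K S := by
  rw [Submodule.mem_span_insert', ← Submodule.map_span]
  constructor
  · rintro ⟨a, z, hz, hLz⟩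
    have hca : c + a = 0 := by
      by_contra hca
      refine hr ⟨(c + a)⁻¹ • (z - v), ?_⟩
      rw [map_smul, map_sub, hLz, inv_smul_eq_iff₀ hca, add_smul]
      abel
    have hvz : L v = L z := by
      rw [hLz, add_assoc, ← add_smul, hca, zero_smul, add_zero]
    exact hL hvz ▸ hz
  · intro hv
    exact ⟨-c, by simpa using Submodule.mem_map_of_mem (f := L) hv⟩

end LinearAlgebra

namespace MvPolynomial

section CommSemiring

variable {R σ τ : Type*} [CommSemiring R]

noncomputable def evalGradient (x : σ → R) (q : MvPolynomial σ R) : σ → R :=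
  fun i => eval x (pderiv i q)

theorem evalGradient_rename {g : σ → τ} (hg : Function.Injective g) (x : τ → R)
    (q : MvPolynomial σ R) :
    evalGradient x (rename g q) = Function.extend g (evalGradient (x ∘ g) q) 0 := by
  funext i
  by_cases hi : ∃ j, g j = i
  · obtain ⟨j, rfl⟩ := hi
    rw [hg.extend_apply, evalGradient, evalGradient, pderiv_rename hg, eval_rename]
  · rw [Function.extend_apply' _ _ _ hi, evalGradient, pderiv_eq_zero_of_notMem_vars, map_zero,
      Pi.zero_apply]
    intro hmem
    obtain ⟨j, -, rfl⟩ := mem_vars_rename g q hmem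
    exact hi ⟨j, rfl⟩

end CommSemiring

theorem evalGradient_X_last_sub_sum_X_castSucc {R : Type*} [CommRing R] {n : ℕ}
    (x : Fin (n + 1) → R) :
    evalGradient x (X (Fin.last n) - ∑ i : Fin n, X (Fin.castSucc i) : MvPolynomial _ R) =
      Fin.snoc (fun _ => -1) 1 := by
  funext i
  induction i using Fin.lastCases with
  | last => simp [evalGradient, pderiv_X]
  | cast i => simp [evalGradient, pderiv_X, Pi.single_apply, (Fin.castSucc_lt_last _).ne]

end MvPolynomial

theorem critical_point_bijection_X_Xprime_general
    (n k : ℕ) (f : Fin k → MvPolynomial (Fin (n+1)) ℂ)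
    (u : Fin (n+1) → ℂ) (p : Fin (n+1) → ℂ)
    (p' : Fin (n+2) → ℂ) (hp' : p' = Fin.snoc p (∑ i, p i))
    (H : MvPolynomial (Fin (n+2)) ℂ)
    (hH : H = X (Fin.last (n+1)) - ∑ i : Fin (n+1), X (Fin.castSucc i))
    (F : Fin (k+1) → MvPolynomial (Fin (n+2)) ℂ)
    (hF : F = Fin.cons H (fun j => MvPolynomial.rename Fin.castSucc (f j))) :
    ((fun i => u i / p i - (∑ i, u i) / (∑ i, p i)) ∈
        Submodule.span ℂ
          (Set.range fun j : Fin k => fun i => eval p (pderiv i (f j)))) ↔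
      ((Fin.snoc (fun i => u i / p i) (-(∑ i, u i) / (∑ i, p i)) : Fin (n+2) → ℂ) ∈
        Submodule.span ℂ
          (Set.range fun j : Fin (k+1) => fun i => eval p' (pderiv i (F j)))) := by
  set L := Function.ExtendByZero.linearMap ℂ (Fin.castSucc : Fin (n + 1) → Fin (n + 2))
  set r : Fin (n + 2) → ℂ := Fin.snoc (fun _ => -1) 1
  set c := (∑ i, u i) / (∑ i, p i)
  have hL : Function.Injective L := Function.extend_injective (Fin.castSucc_injective _) 0
  have hr : r ∉ LinearMap.range L := by
    rintro ⟨w, hw⟩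
    simpa [L, r] using congrFun hw (Fin.last _)
  have hrows :
      (fun j => evalGradient p' (F j)) = Fin.cons r (L ∘ fun j => evalGradient p (f j)) := by
    subst hp' hH hF
    funext j
    induction j using Fin.cases with
    | zero => exact evalGradient_X_last_sub_sum_X_castSucc _
    | succ j =>
      rw [Fin.cons_succ, Fin.cons_succ, evalGradient_rename (Fin.castSucc_injective _),
        Fin.snoc_comp_castSucc]
      rfl
  have htarget :
      (Fin.snoc (fun i => u i / p i) (-(∑ i, u i) / (∑ i, p i)) : Fin (n + 2) → ℂ) =
        L (fun i => u i / p i - c) + (-c) • r := by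
    funext i
    induction i using Fin.lastCases with
    | last => simp [L, r, c, neg_div]
    | cast i => simp [L, r, (Fin.castSucc_injective _).extend_apply]
  change _ ↔ _ ∈ Submodule.span ℂ (Set.range fun j => evalGradient p' (F j))
  rw [hrows, Fin.range_cons, Set.range_comp, htarget]
  exact (Submodule.add_smul_mem_span_insert_image_iff hL hr _ _ _).symm

theorem critical_point_bijection_X_Xprime
    (n k : ℕ) (f : Fin k → MvPolynomial (Fin (n+1)) ℂ)
    (u : Fin (n+1) → ℂ) (p : Fin (n+1) → ℂ)
    (hp : ∀ i, p i ≠ 0) (hps : (∑ i, p i) ≠ 0)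
    (p' : Fin (n+2) → ℂ) (hp' : p' = Fin.snoc p (∑ i, p i))
    (H : MvPolynomial (Fin (n+2)) ℂ)
    (hH : H = X (Fin.last (n+1)) - ∑ i : Fin (n+1), X (Fin.castSucc i))
    (F : Fin (k+1) → MvPolynomial (Fin (n+2)) ℂ)
    (hF : F = Fin.cons H (fun j => MvPolynomial.rename Fin.castSucc (f j))) :
    ((fun i => u i / p i - (∑ i, u i) / (∑ i, p i)) ∈
        Submodule.span ℂ
          (Set.range fun j : Fin k => fun i => eval p (pderiv i (f j)))) ↔
      ((Fin.snoc (fun i => u i / p i) (-(∑ i, u i) / (∑ i, p i)) : Fin (n+2) → ℂ) ∈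
        Submodule.span ℂ
          (Set.range fun j : Fin (k+1) => fun i => eval p' (pderiv i (F j)))) :=
  critical_point_bijection_X_Xprime_general n k f u p p' hp' H hH F hF
end

section
/- Let u₀, u₁, u₂ be positive real numbers and set u₊ := u₀ + u₁ + u₂. Define p₀ := (2u₀+u₁)² / (4u₊²), p₁ := (2u₀+u₁)(u₁+2u₂) / (2u₊²), p₂ := (u₁+2u₂)² / (4u₊²). Then: (a) p₀ + p₁ + p₂ = 1; (b) 4p₀p₂ = p₁²; (c) p₀, p₁, p₂ are all positive; and (d) there exists μ : ℝ such that u₀/p₀ − u₊ = μ·(4p₂), u₁/p₁ − u₊ = μ·(−2p₁), and u₂/p₂ − u₊ = μ·(4p₀). -/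
/-!
Put `s := u₀ + u₁ + u₂`, `x := (2u₀ + u₁)/(2s)` and `y := (u₁ + 2u₂)/(2s)`. Then `x + y = 1`
and the point is the Hardy–Weinberg point `(x², 2xy, y²)`, which lies in the simplex and on the
conic `4p₀p₂ = p₁²`. The Lagrange multiplier is `μ = (4u₀u₂ − u₁²)/(16 s x² y²)`: clearing
denominators, the first critical equation becomes `4 s u₀ − (2u₀ + u₁)² = 4u₀u₂ − u₁²`, and the
other two are similar.
-/

theorem hardyWeinberg_sum_eq_one {x y : ℝ} (h : x + y = 1) : x ^ 2 + 2 * x * y + y ^ 2 = 1 := by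
  rw [← add_sq, h, one_pow]

theorem hardyWeinberg_exists_lagrange_multiplier {u₀ u₁ u₂ x y : ℝ} (hx₀ : x ≠ 0) (hy₀ : y ≠ 0)
    (hs : u₀ + u₁ + u₂ ≠ 0) (hx : 2 * (u₀ + u₁ + u₂) * x = 2 * u₀ + u₁)
    (hy : 2 * (u₀ + u₁ + u₂) * y = u₁ + 2 * u₂) :
    ∃ μ : ℝ,
      u₀ / x ^ 2 - (u₀ + u₁ + u₂) = μ * (4 * y ^ 2) ∧
      u₁ / (2 * x * y) - (u₀ + u₁ + u₂) = μ * (-(2 * (2 * x * y))) ∧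
      u₂ / y ^ 2 - (u₀ + u₁ + u₂) = μ * (4 * x ^ 2) := by
  refine ⟨(4 * u₀ * u₂ - u₁ ^ 2) / (16 * (u₀ + u₁ + u₂) * x ^ 2 * y ^ 2), ?_, ?_, ?_⟩
  · field_simp
    linear_combination -4 * (2 * (u₀ + u₁ + u₂) * x + (2 * u₀ + u₁)) * hx
  · field_simp
    linear_combination -8 * (2 * (u₀ + u₁ + u₂) * y) * hx - 8 * (2 * u₀ + u₁) * hy
  · field_simp
    linear_combination -4 * (2 * (u₀ + u₁ + u₂) * y + (u₁ + 2 * u₂)) * hy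

theorem conic_mle_critical_point
    (u₀ u₁ u₂ : ℝ) (h₀ : 0 < u₀) (h₁ : 0 < u₁) (h₂ : 0 < u₂) :
    (2*u₀+u₁)^2 / (4*(u₀+u₁+u₂)^2) +
        (2*u₀+u₁)*(u₁+2*u₂) / (2*(u₀+u₁+u₂)^2) +
        (u₁+2*u₂)^2 / (4*(u₀+u₁+u₂)^2) = 1 ∧
    4 * ((2*u₀+u₁)^2 / (4*(u₀+u₁+u₂)^2)) * ((u₁+2*u₂)^2 / (4*(u₀+u₁+u₂)^2)) =
      ((2*u₀+u₁)*(u₁+2*u₂) / (2*(u₀+u₁+u₂)^2))^2 ∧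
    (0 < (2*u₀+u₁)^2 / (4*(u₀+u₁+u₂)^2) ∧
      0 < (2*u₀+u₁)*(u₁+2*u₂) / (2*(u₀+u₁+u₂)^2) ∧
      0 < (u₁+2*u₂)^2 / (4*(u₀+u₁+u₂)^2)) ∧
    ∃ μ : ℝ,
      u₀ / ((2*u₀+u₁)^2 / (4*(u₀+u₁+u₂)^2)) - (u₀+u₁+u₂) =
          μ * (4 * ((u₁+2*u₂)^2 / (4*(u₀+u₁+u₂)^2))) ∧
      u₁ / ((2*u₀+u₁)*(u₁+2*u₂) / (2*(u₀+u₁+u₂)^2)) - (u₀+u₁+u₂) =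
          μ * (-(2 * ((2*u₀+u₁)*(u₁+2*u₂) / (2*(u₀+u₁+u₂)^2)))) ∧
      u₂ / ((u₁+2*u₂)^2 / (4*(u₀+u₁+u₂)^2)) - (u₀+u₁+u₂) =
          μ * (4 * ((2*u₀+u₁)^2 / (4*(u₀+u₁+u₂)^2))) := by
  have hs : 0 < u₀ + u₁ + u₂ := by positivity
  have hp₀ : (2*u₀+u₁)^2 / (4*(u₀+u₁+u₂)^2) = ((2*u₀+u₁) / (2*(u₀+u₁+u₂)))^2 := by
    field_simp; ring
  have hp₁ : (2*u₀+u₁)*(u₁+2*u₂) / (2*(u₀+u₁+u₂)^2) =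
      2 * ((2*u₀+u₁) / (2*(u₀+u₁+u₂))) * ((u₁+2*u₂) / (2*(u₀+u₁+u₂))) := by
    field_simp
  have hp₂ : (u₁+2*u₂)^2 / (4*(u₀+u₁+u₂)^2) = ((u₁+2*u₂) / (2*(u₀+u₁+u₂)))^2 := by
    field_simp; ring
  have hxy : (2*u₀+u₁) / (2*(u₀+u₁+u₂)) + (u₁+2*u₂) / (2*(u₀+u₁+u₂)) = 1 := by
    field_simp; ring
  rw [hp₀, hp₁, hp₂]
  exact ⟨hardyWeinberg_sum_eq_one hxy, by ring, ⟨by positivity, by positivity, by positivity⟩,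
    hardyWeinberg_exists_lagrange_multiplier (by positivity) (by positivity) hs.ne'
      (by field_simp) (by field_simp)⟩
end

section
/- Let u₀, u₁, u₂ : ℂ with u₊ := u₀ + u₁ + u₂ ≠ 0. Suppose p₀, p₁, p₂, μ : ℂ satisfy: p₀ ≠ 0, p₁ ≠ 0, p₂ ≠ 0; p₀ + p₁ + p₂ = 1; 4p₀p₂ = p₁²; u₀/p₀ − u₊ = μ·(4p₂); u₁/p₁ − u₊ = μ·(−2p₁); and u₂/p₂ − u₊ = μ·(4p₀). Then p₀ = (2u₀+u₁)² / (4u₊²), p₁ = (2u₀+u₁)(u₁+2u₂) / (2u₊²), and p₂ = (u₁+2u₂)² / (4u₊²). -/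
/-!
Multiplying the critical equations by `p₀`, `p₁`, `p₂` clears the denominators, and in the
combinations `2·(first) + (second)` and `(second) + 2·(third)` the Lagrange multiplier drops out
because of the conic equation: `(2p₀ + p₁) u₊ = 2u₀ + u₁` and `(p₁ + 2p₂) u₊ = u₁ + 2u₂`.
On the other hand the affine conic `p₀ + p₁ + p₂ = 1` is parametrized by
`t ↦ (t², 2t(1 - t), (1 - t)²)` with `t = p₀ + p₁/2`, so each `pᵢ` is a quadratic expression in
`2p₀ + p₁ = 2t` and `p₁ + 2p₂ = 2(1 - t)`.
-/

section Conic

variable {R : Type*} [CommRing R] {p₀ p₁ p₂ : R}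

theorem four_mul_left_eq_sq_of_conic (hsum : p₀ + p₁ + p₂ = 1) (hconic : 4 * p₀ * p₂ = p₁ ^ 2) :
    4 * p₀ = (2 * p₀ + p₁) ^ 2 := by
  linear_combination -(4 * p₀) * hsum + hconic

theorem two_mul_mid_eq_mul_of_conic (hsum : p₀ + p₁ + p₂ = 1) (hconic : 4 * p₀ * p₂ = p₁ ^ 2) :
    2 * p₁ = (2 * p₀ + p₁) * (p₁ + 2 * p₂) := by
  linear_combination -(2 * p₁) * hsum - hconic

theorem four_mul_right_eq_sq_of_conic (hsum : p₀ + p₁ + p₂ = 1) (hconic : 4 * p₀ * p₂ = p₁ ^ 2) :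
    4 * p₂ = (p₁ + 2 * p₂) ^ 2 := by
  linear_combination -(4 * p₂) * hsum + hconic

end Conic

theorem mul_eq_two_mul_add_of_critical {K : Type*} [Field K] {u₀ u₁ s p₀ p₁ p₂ μ : K}
    (hp₀ : p₀ ≠ 0) (hp₁ : p₁ ≠ 0) (hconic : 4 * p₀ * p₂ = p₁ ^ 2)
    (hc₀ : u₀ / p₀ - s = μ * (4 * p₂)) (hc₁ : u₁ / p₁ - s = μ * (-(2 * p₁))) :
    (2 * p₀ + p₁) * s = 2 * u₀ + u₁ := by
  have e₀ : u₀ = p₀ * s + 4 * μ * p₀ * p₂ := by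
    field_simp at hc₀; linear_combination hc₀
  have e₁ : u₁ = p₁ * s - 2 * μ * p₁ ^ 2 := by
    field_simp at hc₁; linear_combination hc₁
  linear_combination -2 * e₀ - e₁ - 2 * μ * hconic

theorem conic_mle_uniqueness
    (u₀ u₁ u₂ : ℂ) (hu : u₀ + u₁ + u₂ ≠ 0)
    (p₀ p₁ p₂ μ : ℂ)
    (hp₀ : p₀ ≠ 0) (hp₁ : p₁ ≠ 0) (hp₂ : p₂ ≠ 0)
    (hsum : p₀ + p₁ + p₂ = 1)
    (hconic : 4 * p₀ * p₂ = p₁ ^ 2)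
    (hc₀ : u₀ / p₀ - (u₀ + u₁ + u₂) = μ * (4 * p₂))
    (hc₁ : u₁ / p₁ - (u₀ + u₁ + u₂) = μ * (-(2 * p₁)))
    (hc₂ : u₂ / p₂ - (u₀ + u₁ + u₂) = μ * (4 * p₀)) :
    p₀ = (2*u₀+u₁)^2 / (4*(u₀+u₁+u₂)^2) ∧
    p₁ = (2*u₀+u₁)*(u₁+2*u₂) / (2*(u₀+u₁+u₂)^2) ∧
    p₂ = (u₁+2*u₂)^2 / (4*(u₀+u₁+u₂)^2) := by
  have hleft : 2 * p₀ + p₁ = (2 * u₀ + u₁) / (u₀ + u₁ + u₂) :=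
    eq_div_of_mul_eq hu (mul_eq_two_mul_add_of_critical hp₀ hp₁ hconic hc₀ hc₁)
  have hright : p₁ + 2 * p₂ = (u₁ + 2 * u₂) / (u₀ + u₁ + u₂) := by
    have hmul := mul_eq_two_mul_add_of_critical hp₂ hp₁ (by linear_combination hconic) hc₂ hc₁
    exact eq_div_of_mul_eq hu (by linear_combination hmul)
  refine ⟨?_, ?_, ?_⟩
  · calc p₀ = (2 * p₀ + p₁) ^ 2 / 4 := by
          linear_combination (four_mul_left_eq_sq_of_conic hsum hconic) / 4
      _ = _ := by rw [hleft]; field_simp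
  · calc p₁ = (2 * p₀ + p₁) * (p₁ + 2 * p₂) / 2 := by
          linear_combination (two_mul_mid_eq_mul_of_conic hsum hconic) / 2
      _ = _ := by rw [hleft, hright]; field_simp
  · calc p₂ = (p₁ + 2 * p₂) ^ 2 / 4 := by
          linear_combination (four_mul_right_eq_sq_of_conic hsum hconic) / 4
      _ = _ := by rw [hright]; field_simp
end
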